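/- arXiv:2509.09937 — 4 statements merged into one kernel-verified Lean document; each statement's English description precedes it below -/
import Mathlib

section
/- In the setting of the adaptive controller equilibrium, suppose Φᵀ Â Φ is positive definite (hence invertible). As α → 1⁻, the equilibrium voltage deviation v*(α) = (K̂ + (1/(1-α)) Φᵀ Â Φ)⁻¹ (Φᵀ a + X⁻¹ δ) tends to the zero vector. -/
open Matrix Filter

/-- As α → 1⁻, the equilibrium voltage deviation
`v*(α) = (K̂ + (1/(1-α)) Φᵀ Â Φ)⁻¹ (Φᵀ a + X⁻¹ δ)` tends to zero. -/
theorem stmt_1 {n : ℕ} (K M : Matrix (Fin n) (Fin n) ℝ) (b : Fin n → ℝ)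
    (hM : M.PosDef) :
    Tendsto (fun α : ℝ => ((K + (1 - α)⁻¹ • M)⁻¹).mulVec b)
      (nhdsWithin 1 (Set.Ioo 0 1)) (nhds 0) := by
  have hMdet : M.det ≠ 0 := ne_of_gt hM.det_pos
  -- the auxiliary family
  set f : ℝ → Matrix (Fin n) (Fin n) ℝ := fun s => s • K + M with hf
  have hfc : Continuous f := by
    exact (continuous_id.smul continuous_const).add continuous_const
  -- g s = s • (f s)⁻¹ *ᵥ b  is continuous at 0 with value 0
  have hinv_eq : (fun s => (f s)⁻¹) = fun s => ((f s).det)⁻¹ • (f s).adjugate := by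
    funext s
    rw [Matrix.inv_def, Ring.inverse_eq_inv']
  have hg : Tendsto (fun s : ℝ => s • ((f s)⁻¹.mulVec b)) (nhds 0) (nhds 0) := by
    have hcontinv : ContinuousAt (fun s => (f s)⁻¹) 0 := by
      rw [hinv_eq]
      exact ((hfc.matrix_det.continuousAt).inv₀ (by simpa [hf] using hMdet)).smul
        hfc.matrix_adjugate.continuousAt
    have hmv : Continuous (fun A : Matrix (Fin n) (Fin n) ℝ => A.mulVec b) :=
      continuous_id.matrix_mulVec continuous_const
    have h1 : ContinuousAt (fun s : ℝ => s • ((f s)⁻¹.mulVec b)) 0 :=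
      continuousAt_id.smul (hmv.continuousAt.comp hcontinv)
    have h2 := h1.tendsto
    rw [zero_smul] at h2
    exact h2
  -- compose with α ↦ 1 - α
  have hsub : Tendsto (fun α : ℝ => 1 - α) (nhdsWithin 1 (Set.Ioo 0 1)) (nhds 0) := by
    have : Tendsto (fun α : ℝ => 1 - α) (nhds 1) (nhds 0) := by
      have hc : Continuous (fun α : ℝ => 1 - α) := continuous_const.sub continuous_id
      simpa using hc.tendsto 1
    exact this.mono_left nhdsWithin_le_nhds
  have hmain : Tendsto (fun α : ℝ => (1 - α) • ((f (1 - α))⁻¹.mulVec b))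
      (nhdsWithin 1 (Set.Ioo 0 1)) (nhds 0) := hg.comp hsub
  -- eventual equality
  have hdetne : ∀ᶠ α in nhdsWithin 1 (Set.Ioo 0 1), (f (1 - α)).det ≠ 0 := by
    have : Tendsto (fun α : ℝ => (f (1 - α)).det) (nhdsWithin 1 (Set.Ioo 0 1))
        (nhds (f 0).det) := (hfc.matrix_det.continuousAt.tendsto).comp (by simpa using hsub)
    have h0 : (f 0).det ≠ 0 := by simpa [hf] using hMdet
    exact this.eventually_ne h0
  have hmem : ∀ᶠ α in nhdsWithin 1 (Set.Ioo 0 1), α ∈ Set.Ioo (0:ℝ) 1 :=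
    eventually_mem_nhdsWithin
  have heq : (fun α : ℝ => (1 - α) • ((f (1 - α))⁻¹.mulVec b)) =ᶠ[nhdsWithin 1 (Set.Ioo 0 1)]
      (fun α : ℝ => ((K + (1 - α)⁻¹ • M)⁻¹).mulVec b) := by
    filter_upwards [hdetne, hmem] with α hdet hα
    have hs : (1 : ℝ) - α ≠ 0 := sub_ne_zero.mpr (ne_of_gt hα.2)
    have hrw : K + (1 - α)⁻¹ • M = ((Units.mk0 ((1-α)⁻¹) (inv_ne_zero hs) : ℝˣ)) • f (1 - α) := by
      simp [hf, smul_add, smul_smul, Units.smul_def, inv_mul_cancel₀ hs]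
    rw [hrw, Matrix.inv_smul' _ _ (isUnit_iff_ne_zero.mpr hdet), Units.smul_def,
      Matrix.smul_mulVec]
    simp [hs]
  exact hmain.congr' heq
end

section
/- In the setting of the adaptive controller equilibrium with Φᵀ Â Φ positive definite, as α → 1⁻, the quantity Φᵀ ã*(α) = (1/(1-α)) Φᵀ Â Φ (K̂ + (1/(1-α)) Φᵀ Â Φ)⁻¹ (Φᵀ a + X⁻¹ δ) converges to Φᵀ a + X⁻¹ δ. -/
open Matrix Filter

/-- As α → 1⁻, `Φᵀ ã*(α) = (1/(1-α)) M (K̂ + (1/(1-α)) M)⁻¹ b` converges to `b`,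
where `M = Φᵀ Â Φ` is positive definite and `b = Φᵀ a + X⁻¹ δ`. -/
theorem stmt_2 {n : ℕ} (K M : Matrix (Fin n) (Fin n) ℝ) (b : Fin n → ℝ)
    (hM : M.PosDef) :
    Tendsto (fun α : ℝ => ((1 - α)⁻¹ • M * (K + (1 - α)⁻¹ • M)⁻¹).mulVec b)
      (nhdsWithin 1 (Set.Ioo 0 1)) (nhds b) := by
  have hdetM : IsUnit M.det := isUnit_iff_ne_zero.2 (ne_of_gt hM.det_pos)
  -- the auxiliary continuous function
  set g : ℝ → Fin n → ℝ := fun α => (M * ((1 - α) • K + M)⁻¹).mulVec b with hg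
  -- continuity of the matrix-valued map α ↦ (1-α)•K + M
  have hA : Continuous fun α : ℝ => (1 - α) • K + M := by continuity
  -- det is continuous, so eventually invertible near α = 1
  have hdet : Tendsto (fun α : ℝ => ((1 - α) • K + M).det) (nhds 1) (nhds M.det) := by
    have := (hA.matrix_det).tendsto (1 : ℝ)
    simpa using this
  have hev : ∀ᶠ α : ℝ in nhds 1, ((1 - α) • K + M).det ≠ 0 :=
    hdet (isOpen_ne.mem_nhds (ne_of_gt hM.det_pos))
  -- g tends to b at 1
  have hcont : Tendsto g (nhds 1) (nhds b) := by
    have hinv : ContinuousAt Inv.inv ((1 - (1:ℝ)) • K + M) := by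
      apply continuousAt_matrix_inv
      have : ((1 - (1:ℝ)) • K + M).det = M.det := by simp
      rw [this]
      have h1 : ContinuousAt (Inv.inv : ℝ → ℝ) M.det :=
        continuousAt_inv₀ (ne_of_gt hM.det_pos)
      have : (Ring.inverse : ℝ → ℝ) = Inv.inv := by
        funext x; exact Ring.inverse_eq_inv x
      rw [this]; exact h1
    have hA1 : ContinuousAt (fun α : ℝ => (1 - α) • K + M) 1 := hA.continuousAt
    have hinvA : ContinuousAt (fun α : ℝ => ((1 - α) • K + M)⁻¹) 1 :=
      ContinuousAt.comp hinv hA1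
    have hm : ContinuousAt (fun α : ℝ => M * ((1 - α) • K + M)⁻¹) 1 :=
      ContinuousAt.comp ((continuous_const.matrix_mul continuous_id).continuousAt) hinvA
    have hfun : ContinuousAt g 1 :=
      (((continuous_id.matrix_mulVec continuous_const).continuousAt).comp hm : _)
    have hval : g 1 = b := by
      simp only [hg, sub_self, zero_smul, zero_add]
      rw [Matrix.mul_nonsing_inv M hdetM, Matrix.one_mulVec]
    simpa [hval] using hfun.tendsto
  -- eventual equality on the filter
  have heq : ∀ᶠ α : ℝ in nhdsWithin 1 (Set.Ioo 0 1),
      ((1 - α)⁻¹ • M * (K + (1 - α)⁻¹ • M)⁻¹).mulVec b = g α := by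
    filter_upwards [nhdsWithin_le_nhds hev, self_mem_nhdsWithin] with α hα hα'
    have h1 : (1 : ℝ) - α ≠ 0 := sub_ne_zero.2 (ne_of_gt hα'.2)
    have hAu : IsUnit ((1 - α) • K + M).det := isUnit_iff_ne_zero.2 hα
    have key : K + (1 - α)⁻¹ • M = (1 - α)⁻¹ • ((1 - α) • K + M) := by
      rw [smul_add, smul_smul, inv_mul_cancel₀ h1, one_smul]
    rw [key]
    have u : ℝˣ := Units.mk0 ((1 - α)⁻¹) (inv_ne_zero h1)
    have hinv2 : ((1 - α)⁻¹ • ((1 - α) • K + M))⁻¹ = (1 - α) • ((1 - α) • K + M)⁻¹ := by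
      have := Matrix.inv_smul' _ (Units.mk0 ((1 - α)⁻¹) (inv_ne_zero h1)) hAu
      simpa [Units.smul_def, Units.val_inv_eq_inv_val] using this
    rw [hinv2, mul_smul_comm, smul_mul_assoc, smul_smul, mul_inv_cancel₀ h1, one_smul]
  refine Tendsto.congr' ?_ (hcont.mono_left nhdsWithin_le_nhds)
  filter_upwards [heq] with α h using h.symm
end

section
/- Let X be positive definite and B symmetric positive semidefinite n×n real matrices, K̂ an n×n matrix such that S := I - X^{1/2} K̂ X^{1/2} is symmetric. Let λ ≠ α be an eigenvalue of the block matrix [[I - X K̂, -X], [B, α I]]. Then there exists a unit vector z ∈ ℝⁿ such that, setting μ_K = zᵀ S z and μ_φ = zᵀ X^{1/2} B X^{1/2} z, the equation μ_K - μ_φ/(λ - α) - λ = 0 holds. -/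
open Matrix

namespace Matrix.PosSemidef

open scoped ComplexOrder

/-- The square root of a positive semidefinite matrix, as `Matrix.PosSemidef.sqrt` was defined
in Mathlib of December 2024 (since removed in favour of `CFC.sqrt`). -/
noncomputable def sqrt {n 𝕜 : Type*} [Fintype n] [DecidableEq n] [RCLike 𝕜] {A : Matrix n n 𝕜}
    (hA : A.PosSemidef) : Matrix n n 𝕜 :=
  (hA.1.eigenvectorUnitary : Matrix n n 𝕜) * diagonal ((↑) ∘ (√·) ∘ hA.1.eigenvalues) *
    (star hA.1.eigenvectorUnitary : Matrix n n 𝕜)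

end Matrix.PosSemidef

/-!
Write the eigenvector as `(u, v)`. The second block row gives `v = (λ - α)⁻¹ B u`, hence `u ≠ 0`
and `(I - X K̂ - (λ - α)⁻¹ X B) u = λ u`. Since `X = R R` with `R = X^{1/2}`, conjugating by `R`
turns this matrix into `S - (λ - α)⁻¹ R B R`, so `R⁻¹ u` is an eigenvector of the latter for `λ`.
Normalising it to `z` and pairing with `z*` gives the scalar equation; both quadratic forms are
real because `S` and `R B R` are Hermitian.
-/

namespace Matrix

variable {n : Type*} [Fintype n]

namespace PosSemidef

open scoped ComplexOrder

variable {𝕜 : Type*} [RCLike 𝕜] [DecidableEq n] {A : Matrix n n 𝕜}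

theorem sqrt_mul_self (hA : A.PosSemidef) : hA.sqrt * hA.sqrt = A := by
  have hsqrt : hA.sqrt = Unitary.conjStarAlgAut 𝕜 _ hA.1.eigenvectorUnitary
      (diagonal ((↑) ∘ (√·) ∘ hA.1.eigenvalues)) := by
    rw [Unitary.conjStarAlgAut_apply]; rfl
  conv_rhs => rw [hA.1.spectral_theorem]
  rw [hsqrt, ← map_mul, diagonal_mul_diagonal]
  congr 2 with i
  simp [← RCLike.ofReal_mul, Real.mul_self_sqrt (hA.eigenvalues_nonneg i)]

theorem sqrt_isHermitian (hA : A.PosSemidef) : hA.sqrt.IsHermitian := by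
  unfold sqrt
  rw [star_eq_conjTranspose]
  refine isHermitian_mul_mul_conjTranspose _ (isHermitian_diagonal_of_self_adjoint _ ?_)
  funext i
  simp [RCLike.conj_ofReal]

theorem isHermitian_sqrt_mul_mul_sqrt (hA : A.PosSemidef) {B : Matrix n n 𝕜}
    (hB : B.IsHermitian) : (hA.sqrt * B * hA.sqrt).IsHermitian := by
  simpa only [hA.sqrt_isHermitian.eq] using isHermitian_conjTranspose_mul_mul hA.sqrt hB

end PosSemidef

open scoped ComplexOrder in
theorem PosDef.isUnit_sqrt {𝕜 : Type*} [RCLike 𝕜] [DecidableEq n] {A : Matrix n n 𝕜}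
    (hA : A.PosDef) : IsUnit hA.posSemidef.sqrt := by
  rw [isUnit_iff_isUnit_det]
  refine isUnit_of_mul_isUnit_left (y := hA.posSemidef.sqrt.det) ?_
  rw [← det_mul, hA.posSemidef.sqrt_mul_self, ← isUnit_iff_isUnit_det]
  exact hA.isUnit

section Eigenvectors

variable {m K : Type*} [Fintype m]

theorem exists_mulVec_eq_smul_of_fromBlocks_smul_one [Field K] [DecidableEq n]
    (A : Matrix m m K) (C : Matrix m n K) (B : Matrix n m K) {α μ : K} (hμ : μ ≠ α)
    {y : m ⊕ n → K} (hy : y ≠ 0) (h : fromBlocks A C B (α • 1) *ᵥ y = μ • y) :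
    ∃ u ≠ 0, (A + (μ - α)⁻¹ • (C * B)) *ᵥ u = μ • u := by
  obtain ⟨u, v, rfl⟩ : ∃ u v, y = Sum.elim u v := ⟨_, _, (Sum.elim_comp_inl_inr y).symm⟩
  have h₁ : A *ᵥ u + C *ᵥ v = μ • u := funext fun i => by
    simpa [fromBlocks_mulVec] using congrFun h (.inl i)
  have h₂ : B *ᵥ u + α • v = μ • v := funext fun i => by
    simpa [fromBlocks_mulVec, smul_mulVec, one_mulVec] using congrFun h (.inr i)
  have hμα : μ - α ≠ 0 := sub_ne_zero.2 hμ
  have hv : v = (μ - α)⁻¹ • B *ᵥ u := by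
    rw [eq_inv_smul_iff₀ hμα, sub_smul, ← h₂, add_sub_cancel_right]
  refine ⟨u, fun hu => hy ?_, ?_⟩
  · simp [hv, hu]
  · rw [add_mulVec, smul_mulVec, ← mulVec_mulVec, ← mulVec_smul, ← hv, h₁]

theorem exists_mulVec_eq_smul_of_mul_eq_mul [CommRing K] [DecidableEq n] {M N P : Matrix n n K}
    (hP : IsUnit P) (hMP : M * P = P * N) {μ : K} {u : n → K} (hu : u ≠ 0)
    (hMu : M *ᵥ u = μ • u) :
    ∃ w ≠ 0, N *ᵥ w = μ • w := by
  obtain ⟨P, rfl⟩ := hP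
  refine ⟨(↑P⁻¹ : Matrix n n K) *ᵥ u, fun hw => hu ?_, ?_⟩
  · simpa [mulVec_mulVec] using congrArg ((P : Matrix n n K) *ᵥ ·) hw
  · have hN : N = (↑P⁻¹ : Matrix n n K) * M * P := by
      rw [Matrix.mul_assoc, hMP, ← Matrix.mul_assoc, Units.inv_mul, Matrix.one_mul]
    rw [hN, mulVec_mulVec, Matrix.mul_assoc, Units.mul_inv, Matrix.mul_one, ← mulVec_mulVec,
      hMu, mulVec_smul]

end Eigenvectors

section RCLike

variable {𝕜 : Type*} [RCLike 𝕜]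

open scoped ComplexOrder in
theorem exists_star_dotProduct_self_eq_one_of_mulVec_eq_smul {M : Matrix n n 𝕜} {μ : 𝕜}
    {w : n → 𝕜} (hw : w ≠ 0) (hMw : M *ᵥ w = μ • w) :
    ∃ z, star z ⬝ᵥ z = 1 ∧ star z ⬝ᵥ M *ᵥ z = μ := by
  obtain ⟨r, hr, hrw⟩ := RCLike.pos_iff_exists_ofReal.1 (dotProduct_star_self_pos_iff.2 hw)
  set t : ℝ := (√r)⁻¹
  have ht : (t : 𝕜) * t * star w ⬝ᵥ w = 1 := by
    rw [← hrw, ← RCLike.ofReal_mul, ← RCLike.ofReal_mul, ← mul_inv,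
      Real.mul_self_sqrt hr.le, inv_mul_cancel₀ hr.ne', RCLike.ofReal_one]
  have hstar : star ((t : 𝕜) • w) = (t : 𝕜) • star w := by
    rw [star_smul, RCLike.star_def, RCLike.conj_ofReal]
  refine ⟨(t : 𝕜) • w, ?_, ?_⟩
  · rw [hstar, smul_dotProduct, dotProduct_smul, smul_eq_mul, smul_eq_mul, ← mul_assoc, ht]
  · rw [hstar, mulVec_smul, hMw, smul_dotProduct, dotProduct_smul, dotProduct_smul]
    simp only [smul_eq_mul]
    linear_combination μ * ht

theorem IsHermitian.exists_ofReal_eq_star_dotProduct_mulVec_self {A : Matrix n n 𝕜}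
    (hA : A.IsHermitian) (x : n → 𝕜) :
    ∃ r : ℝ, (r : 𝕜) = star x ⬝ᵥ A *ᵥ x :=
  ⟨_, RCLike.conj_eq_iff_re.1 (RCLike.conj_eq_iff_im.2 (hA.im_star_dotProduct_mulVec_self x))⟩

theorem exists_star_dotProduct_self_eq_one_and_sub_eq_of_fromBlocks [DecidableEq n]
    {R K B : Matrix n n 𝕜} (hR : IsUnit R) {α μ : 𝕜} (hμ : μ ≠ α)
    {y : n ⊕ n → 𝕜} (hy : y ≠ 0)
    (h : fromBlocks (1 - R * R * K) (-(R * R)) B (α • 1) *ᵥ y = μ • y) :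
    ∃ z, star z ⬝ᵥ z = 1 ∧
      star z ⬝ᵥ (1 - R * K * R) *ᵥ z
        - (μ - α)⁻¹ * star z ⬝ᵥ (R * B * R) *ᵥ z = μ := by
  obtain ⟨u, hu0, hu⟩ := exists_mulVec_eq_smul_of_fromBlocks_smul_one _ _ _ hμ hy h
  have hsimilar : (1 - R * R * K + (μ - α)⁻¹ • (-(R * R) * B)) * R
      = R * (1 - R * K * R - (μ - α)⁻¹ • (R * B * R)) := by
    simp only [sub_eq_add_neg, add_mul, mul_add, smul_mul_assoc, mul_smul_comm, neg_mul, mul_neg,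
      smul_neg, Matrix.mul_assoc, Matrix.one_mul, Matrix.mul_one]
  obtain ⟨w, hw0, hw⟩ := exists_mulVec_eq_smul_of_mul_eq_mul hR hsimilar hu0 hu
  obtain ⟨z, hz1, hz⟩ := exists_star_dotProduct_self_eq_one_of_mulVec_eq_smul hw0 hw
  refine ⟨z, hz1, ?_⟩
  rwa [sub_mulVec, smul_mulVec, dotProduct_sub, dotProduct_smul, smul_eq_mul] at hz

end RCLike

end Matrix

/-- Reduction of the block eigenvalue problem to a scalar Rayleigh-quotient
equation: if `λ ≠ α` is an eigenvalue of `[[I - X K̂, -X], [B, α I]]` and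
`S = I - X^{1/2} K̂ X^{1/2}` is symmetric, then there is a unit vector `z`
with `μ_K - μ_φ/(λ-α) - λ = 0` for the (real) quadratic forms
`μ_K = z* S z`, `μ_φ = z* X^{1/2} B X^{1/2} z`. -/
theorem stmt_6 {n : ℕ} (X K B : Matrix (Fin n) (Fin n) ℝ) (α : ℝ) (lam : ℂ)
    (hX : X.PosDef) (hB : B.PosSemidef)
    (hS : (1 - hX.posSemidef.sqrt * K * hX.posSemidef.sqrt).IsHermitian)
    (hlam : ∃ y : (Fin n ⊕ Fin n) → ℂ, y ≠ 0 ∧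
      ((fromBlocks (1 - X * K) (-X) B (α • 1)).map (Complex.ofReal ·)).mulVec y
        = lam • y)
    (hne : lam ≠ (α : ℂ)) :
    ∃ z : Fin n → ℂ, star z ⬝ᵥ z = 1 ∧ ∃ μK μφ : ℝ,
      (μK : ℂ) = star z ⬝ᵥ
        ((1 - hX.posSemidef.sqrt * K * hX.posSemidef.sqrt).map (Complex.ofReal ·)).mulVec z ∧
      (μφ : ℂ) = star z ⬝ᵥ
        ((hX.posSemidef.sqrt * B * hX.posSemidef.sqrt).map (Complex.ofReal ·)).mulVec z ∧
      (μK : ℂ) - μφ / (lam - α) - lam = 0 := by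
  obtain ⟨y, hy0, hy⟩ := hlam
  let φ := (Complex.ofRealHom : ℝ →+* ℂ).mapMatrix (m := Fin n)
  have hφ : ∀ M, M.map (Complex.ofReal ·) = φ M := fun _ => rfl
  have hφ_herm {M : Matrix (Fin n) (Fin n) ℝ} (hM : M.IsHermitian) : (φ M).IsHermitian :=
    hM.map _ fun a => (Complex.conj_ofReal a).symm
  have hφα : φ (α • 1) = (α : ℂ) • 1 := by
    ext i j
    by_cases h : i = j <;> simp [φ, one_apply, h]
  rw [fromBlocks_map, hφ, hφ, hφ, hφ, hφα, ← hX.posSemidef.sqrt_mul_self] at hy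
  simp only [map_sub, map_one, map_mul, map_neg] at hy
  obtain ⟨z, hz1, hz⟩ :=
    exists_star_dotProduct_self_eq_one_and_sub_eq_of_fromBlocks (hX.isUnit_sqrt.map φ) hne hy0 hy
  obtain ⟨μK, hK⟩ := (hφ_herm hS).exists_ofReal_eq_star_dotProduct_mulVec_self z
  have hT_herm := hφ_herm (hX.posSemidef.isHermitian_sqrt_mul_mul_sqrt hB.1)
  obtain ⟨μφ, hT⟩ := hT_herm.exists_ofReal_eq_star_dotProduct_mulVec_self z
  refine ⟨z, hz1, μK, μφ, hK, hT, ?_⟩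
  rw [map_sub, map_one, map_mul, map_mul] at hK
  rw [map_mul, map_mul] at hT
  rw [← hK, ← hT] at hz
  rw [div_eq_mul_inv]
  linear_combination hz
end

section
/- Let α, μ_K, μ_φ, ε be real numbers with 0 < α ≤ 1-ε, |μ_K| ≤ 1-ε, μ_φ ≥ 0, ε ∈ (0,1), and suppose λ ∈ ℂ satisfies μ_K - μ_φ/(λ - α) - λ = 0 with λ ≠ α. If (μ_K - α)²/4 - μ_φ > 0 (so λ is real), then λ = (μ_K + α)/2 ± √((μ_K - α)²/4 - μ_φ), and |λ| ≤ 1 - ε. -/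
/-!
Clearing the denominator turns the eigenvalue equation into the monic quadratic
`λ² - (μ_K + α) λ + (α μ_K + μ_φ) = 0`, whose discriminant is `(μ_K - α)² - 4 μ_φ`. Since
`μ_φ ≥ 0`, the square root of a quarter of it is at most `|μ_K - α| / 2`, so both real roots lie
in the segment between `μ_K` and `α`, which is contained in `[-(1 - ε), 1 - ε]`.
-/

lemma eq_half_add_sqrt_or_eq_half_sub_sqrt {b c : ℝ} {z : ℂ} (hd : 0 ≤ b ^ 2 / 4 - c)
    (h : z * z - b * z + c = 0) :
    z = ((b / 2 + √(b ^ 2 / 4 - c) : ℝ) : ℂ) ∨ z = ((b / 2 - √(b ^ 2 / 4 - c) : ℝ) : ℂ) := by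
  set s := √(b ^ 2 / 4 - c)
  have hs : (s : ℂ) * s = b ^ 2 / 4 - c := by
    exact_mod_cast Real.mul_self_sqrt hd
  have hdiscrim : discrim (1 : ℂ) (-b) c = (2 * s) * (2 * s) := by
    rw [discrim]
    linear_combination (-4 : ℂ) * hs
  have hroots := (quadratic_eq_zero_iff one_ne_zero hdiscrim z).1 (by linear_combination h)
  push_cast
  rcases hroots with h | h
  · exact Or.inl (by rw [h]; ring)
  · exact Or.inr (by rw [h]; ring)

lemma sqrt_sub_le_abs_sub_div_two {a b p : ℝ} (hp : 0 ≤ p) :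
    √((a - b) ^ 2 / 4 - p) ≤ |a - b| / 2 := by
  rw [Real.sqrt_le_left (by positivity), div_pow, sq_abs]
  linarith

lemma abs_midpoint_add_le {a b t r : ℝ} (ha : |a| ≤ r) (hb : |b| ≤ r)
    (ht : |t| ≤ |a - b| / 2) : |(a + b) / 2 + t| ≤ r := by
  rw [abs_le] at *
  rcases abs_cases (a - b) with ⟨hab, _⟩ | ⟨hab, _⟩ <;> constructor <;> linarith

theorem stmt_7_general (α μK μφ ε : ℝ) (lam : ℂ)
    (hα : 0 < α ∧ α ≤ 1 - ε) (hμK : |μK| ≤ 1 - ε) (hμφ : 0 ≤ μφ)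
    (hne : lam ≠ (α : ℂ))
    (heq : (μK : ℂ) - μφ / (lam - α) - lam = 0)
    (hdisc : 0 < (μK - α) ^ 2 / 4 - μφ) :
    (lam = ((μK + α) / 2 + Real.sqrt ((μK - α) ^ 2 / 4 - μφ) : ℝ) ∨
     lam = ((μK + α) / 2 - Real.sqrt ((μK - α) ^ 2 / 4 - μφ) : ℝ)) ∧
    ‖lam‖ ≤ 1 - ε := by
  have hquad : lam * lam - ((μK + α : ℝ) : ℂ) * lam + ((α * μK + μφ : ℝ) : ℂ) = 0 := by
    have hsub : lam - α ≠ 0 := sub_ne_zero.mpr hne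
    field_simp at heq
    push_cast
    linear_combination -heq
  have hdisc' : (μK + α) ^ 2 / 4 - (α * μK + μφ) = (μK - α) ^ 2 / 4 - μφ := by ring
  have hroots := eq_half_add_sqrt_or_eq_half_sub_sqrt (by rw [hdisc']; exact hdisc.le) hquad
  rw [hdisc'] at hroots
  refine ⟨hroots, ?_⟩
  have hα_abs : |α| ≤ 1 - ε := abs_le.2 ⟨by linarith, hα.2⟩
  have hs := sqrt_sub_le_abs_sub_div_two (a := μK) (b := α) hμφ
  rcases hroots with h | h <;> rw [h, Complex.norm_real, Real.norm_eq_abs]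
  · exact abs_midpoint_add_le hμK hα_abs (by rwa [abs_of_nonneg (Real.sqrt_nonneg _)])
  · exact abs_midpoint_add_le hμK hα_abs (by rwa [abs_neg, abs_of_nonneg (Real.sqrt_nonneg _)])

/-- Real-root case of the eigenvalue bound: if `λ` solves
`μ_K - μ_φ/(λ-α) - λ = 0` with positive discriminant, then
`λ = (μ_K+α)/2 ± √((μ_K-α)²/4 - μ_φ)` and `|λ| ≤ 1-ε`. -/
theorem stmt_7 (α μK μφ ε : ℝ) (lam : ℂ)
    (hε : 0 < ε ∧ ε < 1) (hα : 0 < α ∧ α ≤ 1 - ε) (hμK : |μK| ≤ 1 - ε) (hμφ : 0 ≤ μφ)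
    (hne : lam ≠ (α : ℂ))
    (heq : (μK : ℂ) - μφ / (lam - α) - lam = 0)
    (hdisc : 0 < (μK - α) ^ 2 / 4 - μφ) :
    (lam = ((μK + α) / 2 + Real.sqrt ((μK - α) ^ 2 / 4 - μφ) : ℝ) ∨
     lam = ((μK + α) / 2 - Real.sqrt ((μK - α) ^ 2 / 4 - μφ) : ℝ)) ∧
    ‖lam‖ ≤ 1 - ε :=
  stmt_7_general α μK μφ ε lam hα hμK hμφ hne heq hdisc
end
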